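/- Let w be a pangrammatic word on a finite alphabet S, let f : S → T and g : T → U be surjections, and let t ∈ T. Then r( r( w | (g∘f)⁻¹(g(t)) ) | f⁻¹(t) ) = r( w | f⁻¹(t) ), all restrictions being defined. (This is the third coassociativity identity in the proof that the word species with the decomposition maps Δ_f forms a cooperad.) -/

import Mathlib

/-- One-step reduction of words: either an adjacent equal pair `aa` is replaced
by `a`, or (for a word of length at least two whose first and last letters are
equal) the last letter is deleted. -/
def Step {S : Type*} (w v : List S) : Prop :=
  (∃ (u₁ : List S) (a : S) (u₂ : List S), w = u₁ ++ [a, a] ++ u₂ ∧ v = u₁ ++ [a] ++ u₂) ∨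
  (2 ≤ w.length ∧ w.head? = w.getLast? ∧ v = w.dropLast)

/-- A word is reduced if it has no two equal adjacent letters and either has
length one or has different first and last letters. -/
def Reduced {S : Type*} (w : List S) : Prop :=
  w.Chain' (· ≠ ·) ∧ (w.length = 1 ∨ w.head? ≠ w.getLast?)

/-- `IsReduction w u` : the reduced word `u` is obtainable from `w` by a finite
(possibly empty) sequence of one-step reductions, i.e. `u = r(w)`. -/
def IsReduction {S : Type*} (w u : List S) : Prop :=
  Relation.ReflTransGen Step w u ∧ Reduced u

open Classical in
/-- The restriction `w|A` of a word to a sub-alphabet `A`: delete all letters not in `A`. -/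
noncomputable def restrictWord {S : Type*} (w : List S) (A : Set S) : List S :=
  w.filter fun a => decide (a ∈ A)

/-- A word is crossing if it contains the pattern `… a … b … a … b …` with `a ≠ b`. -/
def Crossing {S : Type*} (w : List S) : Prop :=
  ∃ (i j k l : ℕ) (hij : i < j) (hjk : j < k) (hkl : k < l) (hl : l < w.length),
    w[i]'(by omega) = w[k]'(by omega) ∧ w[j]'(by omega) = w[l]'hl ∧
    w[i]'(by omega) ≠ w[j]'(by omega)

/-!
Reductions are unique: every word `w` has the normal form "delete adjacent repetitions, then
delete the last letter if it equals the first", which is invariant under one-step reductions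
and fixed by reduced words, so `r(w)` is this normal form. Restricting a word to a sub-alphabet
turns each one-step reduction into at most one one-step reduction, so a reduction sequence
`w|B →* r(w|B)` restricts to `w|A →* r(w|B)|A` for `A ⊆ B`; both sides therefore have the same
reduction. Here `A = f⁻¹(t) ⊆ (g∘f)⁻¹(g(t)) = B`.
-/

namespace List

variable {α : Type*} {R : α → α → Prop} [DecidableRel R]

theorem head?_destutter' (l : List α) (a : α) : (l.destutter' R a).head? = some a := by
  induction l generalizing a with
  | nil => rfl
  | cons b l ih =>
    rw [destutter'_cons]
    split_ifs
    · rfl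
    · exact ih a

theorem destutter'_append_cons_cons {b : α} (hb : ¬R b b) (v : List α) :
    ∀ (u : List α) (a : α),
      (u ++ b :: b :: v).destutter' R a = (u ++ b :: v).destutter' R a
  | [], a => by
    by_cases hab : R a b
    · simp only [nil_append, destutter'_cons_pos _ hab, destutter'_cons_neg _ hb]
    · simp only [nil_append, destutter'_cons_neg _ hab]
  | c :: u, a => by
    by_cases hac : R a c
    · simp only [cons_append, destutter'_cons_pos _ hac, destutter'_append_cons_cons hb v u c]
    · simp only [cons_append, destutter'_cons_neg _ hac, destutter'_append_cons_cons hb v u a]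

theorem destutter_append_cons_cons {b : α} (hb : ¬R b b) (u v : List α) :
    (u ++ b :: b :: v).destutter R = (u ++ b :: v).destutter R := by
  cases u with
  | nil => simp only [nil_append, destutter_cons', destutter'_cons_neg _ hb]
  | cons c u => simp only [cons_append, destutter_cons', destutter'_append_cons_cons hb]

theorem destutter'_concat (l : List α) (a x : α) :
    (l ++ [x]).destutter' R a =
      if R ((l.destutter' R a).getLast (destutter'_ne_nil l R)) x then l.destutter' R a ++ [x]
      else l.destutter' R a := by
  induction l generalizing a with
  | nil => by_cases h : R a x <;> simp [h]
  | cons b l ih =>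
    by_cases hab : R a b
    · simp only [cons_append, destutter'_cons_pos _ hab, ih, getLast_cons (destutter'_ne_nil l R)]
      split_ifs <;> rfl
    · simp only [cons_append, destutter'_cons_neg _ hab, ih]

theorem eq_cons_append_of_head?_eq_getLast? {w : List α} (hlen : 2 ≤ w.length)
    (hw : w.head? = w.getLast?) : ∃ (a : α) (m : List α), w = a :: (m ++ [a]) := by
  obtain _ | ⟨a, _ | ⟨b, l⟩⟩ := w
  · simp at hlen
  · simp at hlen
  · have hne : b :: l ≠ [] := cons_ne_nil b l
    have hlast : (b :: l).getLast hne = a := by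
      simpa [getLast?_cons_cons, getLast?_eq_some_getLast hne] using hw.symm
    exact ⟨a, (b :: l).dropLast, by rw [← hlast, dropLast_append_getLast hne]⟩

end List

section Reduction

open List

variable {S : Type*}

theorem step_iff {w v : List S} :
    Step w v ↔ (∃ (u₁ : List S) (a : S) (u₂ : List S),
        w = u₁ ++ [a, a] ++ u₂ ∧ v = u₁ ++ [a] ++ u₂) ∨
      ∃ (a : S) (m : List S), w = a :: (m ++ [a]) ∧ v = a :: m := by
  refine or_congr Iff.rfl ⟨fun ⟨hlen, hw, hv⟩ => ?_, ?_⟩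
  · obtain ⟨a, m, rfl⟩ := eq_cons_append_of_head?_eq_getLast? hlen hw
    exact ⟨a, m, rfl, by rw [hv, ← cons_append, dropLast_concat]⟩
  · rintro ⟨a, m, rfl, rfl⟩
    rw [← cons_append]
    exact ⟨by simp, by rw [getLast?_concat]; rfl, dropLast_concat.symm⟩

theorem Step.filter (p : S → Bool) {w v : List S} (h : Step w v) :
    Relation.ReflTransGen Step (w.filter p) (v.filter p) := by
  rcases step_iff.1 h with ⟨u₁, a, u₂, rfl, rfl⟩ | ⟨a, m, rfl, rfl⟩
  · by_cases hpa : p a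
    · refine .single (step_iff.2 (.inl ⟨u₁.filter p, a, u₂.filter p, ?_, ?_⟩)) <;>
        simp [filter_append, hpa]
    · simp [filter_append, hpa, Relation.ReflTransGen.refl]
  · by_cases hpa : p a
    · refine .single (step_iff.2 (.inr ⟨a, m.filter p, ?_, ?_⟩)) <;>
        simp [filter_append, hpa]
    · simp [filter_append, hpa, Relation.ReflTransGen.refl]

theorem reflTransGen_step_filter (p : S → Bool) {w v : List S}
    (h : Relation.ReflTransGen Step w v) :
    Relation.ReflTransGen Step (w.filter p) (v.filter p) := by
  induction h with
  | refl => exact .refl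
  | tail _ hstep ih => exact ih.trans (hstep.filter p)

variable [DecidableEq S]

def cyclicReduce (d : List S) : List S :=
  if 2 ≤ d.length ∧ d.head? = d.getLast? then d.dropLast else d

def normalForm (w : List S) : List S :=
  cyclicReduce (w.destutter (· ≠ ·))

theorem cyclicReduce_of_head?_ne_getLast? {d : List S} (hd : d.head? ≠ d.getLast?) :
    cyclicReduce d = d :=
  if_neg fun h => hd h.2

theorem cyclicReduce_concat_self {d : List S} {a : S} (hd : d.head? = some a) :
    cyclicReduce (d ++ [a]) = d := by
  obtain _ | ⟨b, d⟩ := d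
  · cases hd
  obtain rfl : b = a := Option.some_injective _ hd
  exact if_pos ⟨by simp, by rw [getLast?_concat]; rfl⟩ |>.trans dropLast_concat

theorem normalForm_cons_concat_self (a : S) (m : List S) :
    normalForm (a :: (m ++ [a])) = normalForm (a :: m) := by
  have hhead : (m.destutter' (· ≠ ·) a).head? = some a := head?_destutter' m a
  simp only [normalForm, destutter_cons', destutter'_concat]
  split_ifs with hlast
  · refine (cyclicReduce_concat_self hhead).trans (cyclicReduce_of_head?_ne_getLast? ?_).symm
    rw [hhead, getLast?_eq_some_getLast (destutter'_ne_nil m _)]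
    exact fun h => hlast (Option.some_injective _ h).symm
  · rfl

theorem Step.normalForm_eq {w v : List S} (h : Step w v) : normalForm w = normalForm v := by
  rcases step_iff.1 h with ⟨u₁, a, u₂, rfl, rfl⟩ | ⟨a, m, rfl, rfl⟩
  · simp only [normalForm, append_assoc, cons_append, nil_append,
      destutter_append_cons_cons (R := (· ≠ ·)) (not_not.2 rfl)]
  · exact normalForm_cons_concat_self a m

theorem normalForm_eq_of_reflTransGen {w v : List S} (h : Relation.ReflTransGen Step w v) :
    normalForm w = normalForm v := by
  induction h with
  | refl => rfl
  | tail _ hstep ih => exact ih.trans hstep.normalForm_eq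

theorem Reduced.normalForm_eq {u : List S} (h : Reduced u) : normalForm u = u := by
  obtain ⟨hchain, hlen | hne⟩ := h
  · simp [normalForm, cyclicReduce, destutter_of_isChain _ _ hchain, hlen]
  · rw [normalForm, destutter_of_isChain _ _ hchain, cyclicReduce_of_head?_ne_getLast? hne]

theorem IsReduction.eq_normalForm {w u : List S} (h : IsReduction w u) : u = normalForm w := by
  rw [normalForm_eq_of_reflTransGen h.1, h.2.normalForm_eq]

end Reduction

theorem restrictWord_restrictWord {S : Type*} {A B : Set S} (hAB : A ⊆ B) (w : List S) :
    restrictWord (restrictWord w B) A = restrictWord w A := by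
  classical
  simp only [restrictWord, List.filter_filter]
  refine List.filter_congr fun a _ => ?_
  by_cases h : a ∈ A
  · simp [h, hAB h]
  · simp [h]

theorem coassociativity_third_general {S T U : Type*} (f : S → T) (g : T → U) (w : List S) (t : T)
    (y : List S) (hy : IsReduction (restrictWord w ((g ∘ f) ⁻¹' {g t})) y)
    (p : List S) (hp : IsReduction (restrictWord y (f ⁻¹' {t})) p)
    (q : List S) (hq : IsReduction (restrictWord w (f ⁻¹' {t})) q) :
    p = q := by
  classical
  have hsub : f ⁻¹' {t} ⊆ (g ∘ f) ⁻¹' {g t} := fun s (hs : f s = t) => by simp [hs]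
  have hrestrict : Relation.ReflTransGen Step
      (restrictWord w (f ⁻¹' {t})) (restrictWord y (f ⁻¹' {t})) := by
    rw [← restrictWord_restrictWord hsub]
    exact reflTransGen_step_filter _ hy.1
  rw [hp.eq_normalForm, hq.eq_normalForm, normalForm_eq_of_reflTransGen hrestrict]

/-- The third coassociativity identity for the word cooperad: for a
pangrammatic word `w` on `S`, surjections `f : S → T`, `g : T → U`, and
`t ∈ T`, one has `r(r(w | (g∘f)⁻¹(g(t))) | f⁻¹(t)) = r(w | f⁻¹(t))`. -/
theorem coassociativity_third {S T U : Type*} [Fintype S] [Fintype T] [Fintype U]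
    (f : S → T) (g : T → U) (hf : Function.Surjective f) (hg : Function.Surjective g)
    (w : List S) (hw : w ≠ []) (hpan : ∀ s : S, s ∈ w) (t : T)
    (y : List S) (hy : IsReduction (restrictWord w ((g ∘ f) ⁻¹' {g t})) y)
    (p : List S) (hp : IsReduction (restrictWord y (f ⁻¹' {t})) p)
    (q : List S) (hq : IsReduction (restrictWord w (f ⁻¹' {t})) q) :
    p = q :=
  coassociativity_third_general f g w t y hy p hp q hq
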